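/- arXiv:1411.2364 — 2 statements merged into one kernel-verified Lean document; each statement's English description precedes it below -/
import Mathlib

section
/- Rayleigh lower envelope: for the kernel p(y|x) = (1/(1+x²))exp(−y/(1+x²)) with 0 ≤ x ≤ A, define q(y) = (1/(1+A²))exp(−y/(1+A²)) for 0 ≤ y ≤ y₂ and q(y) = exp(−y) for y > y₂, where y₂ = (1+A²)ln(1+A²)/A². Then q(y) ≤ p(y|x) for all x ∈ [0,A] and all y ≥ 0. -/
/-!
Write the kernel as `p = exp (-(v + y e^{-v}))` with `v = log (1 + x²)`. For `y ≥ 0` the exponent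
`v + y e^{-v}` is convex in `v`, so on `v ∈ [0, log (1 + A²)]` the kernel is at least the smaller of
its values at the endpoints `x = 0` and `x = A`. The threshold `y₂` is exactly where these two
endpoint values cross, so `q` is that minimum.
-/

open Real

noncomputable def expKernel (s y : ℝ) : ℝ := 1 / s * exp (-y / s)

theorem expKernel_one (y : ℝ) : expKernel 1 y = exp (-y) := by simp [expKernel]

theorem expKernel_eq_exp (y : ℝ) {s : ℝ} (hs : 0 < s) :
    expKernel s y = exp (-(log s + y * exp (-log s))) := by
  rw [exp_neg (log s), exp_log hs, neg_add, exp_add, exp_neg, exp_log hs]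
  simp only [expKernel]
  ring_nf

theorem convexOn_add_mul_exp_neg {y : ℝ} (hy : 0 ≤ y) :
    ConvexOn ℝ Set.univ (fun v => v + y * exp (-v)) :=
  convexOn_id convex_univ |>.add <|
    (convexOn_exp.comp_linearMap (-LinearMap.id)).smul hy

theorem min_expKernel_le {y a b s : ℝ} (hy : 0 ≤ y) (ha : 0 < a) (has : a ≤ s) (hsb : s ≤ b) :
    min (expKernel a y) (expKernel b y) ≤ expKernel s y := by
  have hs := ha.trans_le has
  have hb := hs.trans_le hsb
  have hlog : log s ∈ Set.Icc (log a) (log b) :=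
    ⟨log_le_log ha has, log_le_log hs hsb⟩
  have := (convexOn_add_mul_exp_neg hy).neg.min_le_of_mem_Icc trivial trivial hlog
  rw [expKernel_eq_exp y ha, expKernel_eq_exp y hb, expKernel_eq_exp y hs,
    ← exp_monotone.map_min]
  exact exp_le_exp.2 this

theorem expKernel_le_expKernel_one_iff {s : ℝ} (y : ℝ) (hs : 0 < s) :
    expKernel s y ≤ expKernel 1 y ↔ y * (s - 1) ≤ s * log s := by
  rw [expKernel_eq_exp y hs, expKernel_eq_exp y one_pos, exp_le_exp, exp_neg, exp_log hs]
  simp only [log_one, neg_zero, exp_zero, zero_add, mul_one, neg_le_neg_iff]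
  rw [← mul_le_mul_iff_of_pos_left hs]
  field_simp
  constructor <;> intro h <;> linarith

-- At `d = 0` the threshold is the junk value `0 / 0 = 0`, but then both kernels coincide.
theorem expKernel_le_expKernel_one_of_le_div {d y : ℝ} (hd : 0 ≤ d)
    (h : y ≤ (1 + d) * log (1 + d) / d) : expKernel (1 + d) y ≤ expKernel 1 y := by
  rw [expKernel_le_expKernel_one_iff y (by linarith), add_sub_cancel_left]
  rcases hd.eq_or_lt with rfl | hd
  · simp
  · rwa [← le_div_iff₀ hd]

theorem expKernel_one_le_expKernel_of_div_lt {d y : ℝ} (hd : 0 ≤ d)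
    (h : (1 + d) * log (1 + d) / d < y) : expKernel 1 y ≤ expKernel (1 + d) y := by
  rcases hd.eq_or_lt with rfl | hd
  · simp
  · refine le_of_not_ge fun h' => h.not_ge ?_
    rw [expKernel_le_expKernel_one_iff y (by linarith), add_sub_cancel_left] at h'
    rwa [le_div_iff₀ hd]

theorem stmt13_general (A : ℝ) :
    ∀ x ∈ Set.Icc (0 : ℝ) A, ∀ y : ℝ, 0 ≤ y →
      (if y ≤ (1 + A ^ 2) * Real.log (1 + A ^ 2) / A ^ 2 then
          (1 / (1 + A ^ 2)) * Real.exp (-y / (1 + A ^ 2))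
        else Real.exp (-y))
        ≤ (1 / (1 + x ^ 2)) * Real.exp (-y / (1 + x ^ 2)) := by
  rintro x ⟨hx0, hxA⟩ y hy
  have hA := sq_nonneg A
  rw [← expKernel_one]
  calc _ ≤ min (expKernel 1 y) (expKernel (1 + A ^ 2) y) := by
        split_ifs with h
        · exact le_min (expKernel_le_expKernel_one_of_le_div hA h) le_rfl
        · exact le_min le_rfl (expKernel_one_le_expKernel_of_div_lt hA (not_le.1 h))
    _ ≤ expKernel (1 + x ^ 2) y :=
        min_expKernel_le hy one_pos (le_add_of_nonneg_right (sq_nonneg x)) (by gcongr)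

/-- Rayleigh lower envelope: with `y₂ = (1+A²) ln(1+A²) / A²` and
`q(y) = (1/(1+A²)) exp(-y/(1+A²))` for `y ≤ y₂`, `q(y) = exp(-y)` for `y > y₂`,
one has `q(y) ≤ (1/(1+x²)) exp(-y/(1+x²))` for all `x ∈ [0,A]` and `y ≥ 0`. -/
theorem stmt13 (A : ℝ) (hA : 0 < A) :
    ∀ x ∈ Set.Icc (0 : ℝ) A, ∀ y : ℝ, 0 ≤ y →
      (if y ≤ (1 + A ^ 2) * Real.log (1 + A ^ 2) / A ^ 2 then
          (1 / (1 + A ^ 2)) * Real.exp (-y / (1 + A ^ 2))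
        else Real.exp (-y))
        ≤ (1 / (1 + x ^ 2)) * Real.exp (-y / (1 + x ^ 2)) :=
  stmt13_general A
end

section
/- Rayleigh upper envelope: fix A > 0, c > 2, and 0 < γ < min{1, (c − ln c)/ln(c(1+A²))}. Then for all x with 0 ≤ x ≤ A and all y > c(1+A²), one has (1/(1+x²))exp(−y/(1+x²)) < 1/y^{1+γ}. -/
open Real

/-- Rayleigh upper envelope: for `c > 2` and
`0 < γ < min {1, (c - ln c)/ln(c(1+A²))}`, the kernel is bounded by `1/y^{1+γ}`
for `y > c(1+A²)` and `0 ≤ x ≤ A`. -/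
theorem stmt14 (A c γ : ℝ) (hA : 0 < A) (hc : 2 < c)
    (hγ0 : 0 < γ)
    (hγ : γ < min 1 ((c - Real.log c) / Real.log (c * (1 + A ^ 2)))) :
    ∀ x ∈ Set.Icc (0 : ℝ) A, ∀ y : ℝ, c * (1 + A ^ 2) < y →
      (1 / (1 + x ^ 2)) * Real.exp (-y / (1 + x ^ 2)) < 1 / y ^ (1 + γ) := by
  rintro x ⟨hx0, hxA⟩ y hy
  set B : ℝ := 1 + A ^ 2 with hBdef
  set s : ℝ := 1 + x ^ 2 with hsdef
  have hB1 : 1 < B := by nlinarith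
  have hs1 : (1:ℝ) ≤ s := by nlinarith
  have hsB : s ≤ B := by nlinarith
  have hs0 : (0:ℝ) < s := by linarith
  have hB0 : (0:ℝ) < B := by linarith
  have hc0 : (0:ℝ) < c := by linarith
  have hcB : (0:ℝ) < c * B := by positivity
  have hyB : B < y := by nlinarith
  have hy0 : (0:ℝ) < y := by linarith
  have hL : Real.log (c * B) = Real.log c + Real.log B :=
    Real.log_mul (ne_of_gt hc0) (ne_of_gt hB0)
  have hL0 : 0 < Real.log (c * B) := Real.log_pos (by nlinarith)
  have hγL : γ * Real.log (c * B) < c - Real.log c := by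
    have h := lt_of_lt_of_le hγ (min_le_right _ _)
    have := mul_lt_mul_of_pos_right h hL0
    calc γ * Real.log (c*B) < ((c - Real.log c)/Real.log (c*B)) * Real.log (c*B) := this
      _ = c - Real.log c := by field_simp
  have hγ1 : γ < 1 := lt_of_lt_of_le hγ (min_le_left _ _)
  -- key inequality
  have key : (1+γ) * Real.log y < Real.log s + y / s := by
    have h1 : Real.log (y / (c*B)) ≤ y/(c*B) - 1 :=
      Real.log_le_sub_one_of_pos (by positivity)
    have h2 : Real.log (B / s) ≤ B/s - 1 :=
      Real.log_le_sub_one_of_pos (by positivity)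
    have hlogy : Real.log y ≤ Real.log (c*B) + (y/(c*B) - 1) := by
      have hd : Real.log (y/(c*B)) = Real.log y - Real.log (c*B) :=
        Real.log_div (ne_of_gt hy0) (ne_of_gt hcB)
      linarith [h1, hd.ge, hd.le]
    have hlogBs : Real.log B - Real.log s ≤ B/s - 1 := by
      have hd : Real.log (B/s) = Real.log B - Real.log s :=
        Real.log_div (ne_of_gt hB0) (ne_of_gt hs0)
      linarith [h2, hd.ge, hd.le]
    -- Step A : log B + y/B ≤ log s + y/s
    have stepA : Real.log B + y / B ≤ Real.log s + y / s := by
      have h3 : y / s - y / B = y * (B - s) / (s * B) := by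
        field_simp
      have h4 : (B - s)/s ≤ y * (B - s)/(s*B) := by
        rw [div_le_div_iff₀ hs0 (by positivity)]
        nlinarith [mul_nonneg (mul_nonneg (sub_nonneg.2 hsB) hs0.le) (sub_nonneg.2 hyB.le)]
      have h5 : (B/s - 1) = (B - s)/s := by field_simp
      linarith
    -- Step B : (1+γ) log y < log B + y/B
    have stepB : (1+γ) * Real.log y < Real.log B + y / B := by
      set L : ℝ := Real.log (c*B) with hLdef
      set D : ℝ := y/(c*B) - 1 with hDdef
      have t0 : 0 < D := by
        rw [hDdef, sub_pos, lt_div_iff₀ hcB]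
        linarith
      have m1 : (1+γ) * Real.log y ≤ (1+γ) * (L + D) :=
        mul_le_mul_of_nonneg_left hlogy (by linarith)
      have m2 : (1+γ) * D < c * D :=
        mul_lt_mul_of_pos_right (by linarith) t0
      have m3 : c * D = y/B - c := by
        rw [hDdef]; field_simp
      have m4 : (1+γ) * L < c + Real.log B := by
        have e1 : (1+γ) * L = L + γ * L := by ring
        linarith [hL.le, hL.ge, hγL, e1.le, e1.ge]
      have expand : (1+γ) * (L + D) = (1+γ) * L + (1+γ) * D := by ring
      clear_value L D
      linarith [m1, m2, m3.le, m3.ge, m4, expand.le, expand.ge]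
    linarith
  -- conclude
  have lhs_eq : (1 / s) * Real.exp (-y / s) = Real.exp (-(y/s) - Real.log s) := by
    rw [Real.exp_sub, Real.exp_log hs0, neg_div]
    ring
  have rhs_eq : 1 / y ^ (1+γ) = Real.exp (-((1+γ) * Real.log y)) := by
    rw [Real.rpow_def_of_pos hy0, mul_comm, Real.exp_neg, one_div]
  rw [lhs_eq, rhs_eq]
  exact Real.exp_lt_exp.mpr (by linarith)
end
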